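/- arXiv:2007.15041 — 3 statements merged into one kernel-verified Lean document; each statement's English description precedes it below -/
import Mathlib

section
/- The function h(t,x) = x + ∫_{e^x}^∞ (1/r) e^{-r²/(2t)} dr satisfies the PDE h_t = (1/2) e^{-2x} h_xx for all t > 0 and x ∈ ℝ. -/
/-!
The substitution `r = √t u` gives `h(t, x) = x + G(eˣ / √t)` with `G(b) = ∫_b^∞ u⁻¹ e^{-u²/2} du`,
so both sides of the PDE follow from the fundamental theorem of calculus and the chain rule:
with `b = eˣ / √t` one gets `h_t = e^{-b²/2} / (2t)` and `h_xx = b² e^{-b²/2}`, and `b² = e^{2x} / t`.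
-/

open MeasureTheory

/-- Value function of the inverse 2D Bessel process:
`h(t,x) = x + ∫_{e^x}^∞ (1/r) e^{-r²/(2t)} dr`. -/
noncomputable def invBessel2Dh (t x : ℝ) : ℝ :=
  x + ∫ r in Set.Ioi (Real.exp x), r⁻¹ * Real.exp (-r ^ 2 / (2 * t))

open Set Filter Real

theorem hasDerivAt_integral_Ioi {E : Type*} [NormedAddCommGroup E] [NormedSpace ℝ E]
    [CompleteSpace E] {f : ℝ → E} {b c : ℝ} (hf : IntegrableOn f (Ioi c)) (hcb : c < b)
    (hfb : ContinuousAt f b) :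
    HasDerivAt (fun a => ∫ x in Ioi a, f x) (-f b) b := by
  have hsplit : (fun a => ∫ x in Ioi a, f x) =ᶠ[nhds b]
      fun a => (∫ x in Ioi c, f x) - ∫ x in c..a, f x :=
    eventually_of_mem (Ioi_mem_nhds hcb) fun a hca => by
      simp only [← intervalIntegral.integral_Ioi_sub_Ioi hf (le_of_lt hca), sub_sub_cancel]
  have hprimitive : HasDerivAt (fun a => ∫ x in c..a, f x) (f b) b :=
    intervalIntegral.integral_hasDerivAt_right
      ((intervalIntegrable_iff_integrableOn_Ioc_of_le hcb.le).2
        (hf.mono_set Ioc_subset_Ioi_self))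
      (AEStronglyMeasurable.stronglyMeasurableAtFilter_of_mem hf.aestronglyMeasurable
        (Ioi_mem_nhds hcb)) hfb
  exact (hprimitive.const_sub _).congr_of_eventuallyEq hsplit

theorem integral_Ioi_inv_smul_comp_div {E : Type*} [NormedAddCommGroup E] [NormedSpace ℝ E]
    (φ : ℝ → E) (a : ℝ) {c : ℝ} (hc : 0 < c) :
    ∫ r in Ioi a, r⁻¹ • φ (r / c) = ∫ u in Ioi (a / c), u⁻¹ • φ u := by
  have h := integral_comp_mul_left_Ioi (fun r => r⁻¹ • φ (r / c)) (a / c) hc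
  simp only [mul_div_cancel_left₀ _ hc.ne', mul_div_cancel₀ _ hc.ne', mul_inv, mul_smul] at h
  rw [integral_smul] at h
  exact (smul_right_injective E (inv_ne_zero hc.ne') h).symm

noncomputable def gaussInvTail (b : ℝ) : ℝ :=
  ∫ u in Ioi b, u⁻¹ * exp (-u ^ 2 / 2)

theorem integrableOn_inv_mul_exp_neg_sq_div_two {c : ℝ} (hc : 0 < c) :
    IntegrableOn (fun u => u⁻¹ * exp (-u ^ 2 / 2)) (Ioi c) := by
  refine Integrable.mono' ((integrable_exp_neg_mul_sq one_half_pos).const_mul c⁻¹).integrableOn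
    (by fun_prop) ?_
  filter_upwards [ae_restrict_mem measurableSet_Ioi] with u (hu : c < u)
  have hu0 : 0 < u := hc.trans hu
  rw [norm_of_nonneg (by positivity), show -u ^ 2 / 2 = -(1 / 2) * u ^ 2 by ring]
  gcongr

theorem hasDerivAt_gaussInvTail {b : ℝ} (hb : 0 < b) :
    HasDerivAt gaussInvTail (-(b⁻¹ * exp (-b ^ 2 / 2))) b :=
  hasDerivAt_integral_Ioi (integrableOn_inv_mul_exp_neg_sq_div_two (half_pos hb))
    (half_lt_self hb) ((continuousAt_inv₀ hb.ne').mul (by fun_prop))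

theorem invBessel2Dh_eq_gaussInvTail {t : ℝ} (ht : 0 < t) (x : ℝ) :
    invBessel2Dh t x = x + gaussInvTail (exp x / √t) := by
  have hscale := integral_Ioi_inv_smul_comp_div (fun u => exp (-u ^ 2 / 2)) (exp x)
    (sqrt_pos.2 ht)
  simp only [smul_eq_mul, div_pow, sq_sqrt ht.le] at hscale
  rw [invBessel2Dh, gaussInvTail, ← hscale]
  congr! 5
  ring

theorem div_sqrt_sq_div_two {t : ℝ} (ht : 0 ≤ t) (a : ℝ) :
    (a / √t) ^ 2 / 2 = a ^ 2 / (2 * t) := by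
  rw [div_pow, sq_sqrt ht, div_div, mul_comm]

theorem hasDerivAt_invBessel2Dh_time {t : ℝ} (ht : 0 < t) (x : ℝ) :
    HasDerivAt (fun s => invBessel2Dh s x) ((2 * t)⁻¹ * exp (-exp x ^ 2 / (2 * t))) t := by
  have hsqrt : 0 < √t := sqrt_pos.2 ht
  have hb := (hasDerivAt_const t (exp x)).fun_div (hasDerivAt_sqrt ht.ne') hsqrt.ne'
  have hh := ((hasDerivAt_gaussInvTail (by positivity)).comp t hb).const_add x
  refine (hh.congr_of_eventuallyEq ?_).congr_deriv ?_
  · filter_upwards [Ioi_mem_nhds ht] with s hs using invBessel2Dh_eq_gaussInvTail hs x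
  · rw [neg_div, div_sqrt_sq_div_two ht.le, ← neg_div]
    field_simp
    rw [sq_sqrt ht.le]
    ring

theorem hasDerivAt_invBessel2Dh_space {t : ℝ} (ht : 0 < t) (x : ℝ) :
    HasDerivAt (invBessel2Dh t) (1 - exp (-exp x ^ 2 / (2 * t))) x := by
  have hsqrt : 0 < √t := sqrt_pos.2 ht
  have hb := (hasDerivAt_exp x).div_const √t
  have hh := (hasDerivAt_id x).add ((hasDerivAt_gaussInvTail (by positivity)).comp x hb)
  rw [show invBessel2Dh t = fun y => id y + gaussInvTail (exp y / √t) from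
    funext (invBessel2Dh_eq_gaussInvTail ht)]
  refine hh.congr_deriv ?_
  rw [neg_div, div_sqrt_sq_div_two ht.le, ← neg_div]
  field_simp
  ring

theorem iteratedDeriv_two_invBessel2Dh {t : ℝ} (ht : 0 < t) (x : ℝ) :
    iteratedDeriv 2 (invBessel2Dh t) x = exp x ^ 2 / t * exp (-exp x ^ 2 / (2 * t)) := by
  have hsq : HasDerivAt (fun y => -exp y ^ 2 / (2 * t)) (-(2 * exp x ^ 1 * exp x) / (2 * t)) x :=
    ((hasDerivAt_exp x).pow 2).neg.div_const (2 * t)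
  have hexp := hsq.exp.const_sub 1
  rw [iteratedDeriv_succ, iteratedDeriv_one,
    funext fun y => (hasDerivAt_invBessel2Dh_space ht y).deriv, hexp.deriv]
  field_simp

/-- `h` satisfies the Cauchy PDE `h_t = (1/2) e^{-2x} h_xx` for all `t > 0`, `x ∈ ℝ`. -/
theorem invBessel2Dh_pde (t x : ℝ) (ht : 0 < t) :
    deriv (fun s => invBessel2Dh s x) t
      = (1 / 2) * Real.exp (-2 * x) * iteratedDeriv 2 (fun y => invBessel2Dh t y) x := by
  have hexp : exp (-2 * x) * exp x ^ 2 = 1 := by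
    rw [← exp_nat_mul, ← exp_add]
    norm_num
  rw [(hasDerivAt_invBessel2Dh_time ht x).deriv, iteratedDeriv_two_invBessel2Dh ht]
  linear_combination (-(2 * t)⁻¹ * exp (-exp x ^ 2 / (2 * t))) * hexp
end

section
/- For each fixed t > 0, lim_{x → -∞} ( x + ∫_{e^x}^∞ (1/r) e^{-r²/(2t)} dr ) = (1/2)(log 2 + log t − γ), where γ is the Euler–Mascheroni constant. -/
/-!
Substituting `u = r² / (2t)` turns the integral into `E₁(e^{2x} / (2t)) / 2`, where
`E₁(z) = ∫_z^∞ u⁻¹ e^{-u} du` is the exponential integral. Integrating by parts against `log u`,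
`E₁(z) + log z = ∫_z^∞ log u · e^{-u} du + log z · (1 - e^{-z})`, which tends to
`∫_0^∞ log u · e^{-u} du = Γ'(1) = -γ` as `z → 0⁺`. With `z = e^{2x} / (2t)` we have
`x = (log z + log (2t)) / 2`, so the expression is `(E₁(z) + log z) / 2 + log (2t) / 2`.
-/

open MeasureTheory Filter Set Real Topology

theorem integral_log_mul_exp_neg_Ioi_zero :
    ∫ u in Ioi (0 : ℝ), log u * exp (-u) = -eulerMascheroniConstant := by
  have hΓ : HasDerivAt Complex.GammaIntegral (-eulerMascheroniConstant) 1 := by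
    refine Complex.hasDerivAt_Gamma_one.congr_of_eventuallyEq ?_
    filter_upwards [(isOpen_lt continuous_const Complex.continuous_re).mem_nhds
      (by norm_num : (0 : ℝ) < (1 : ℂ).re)] with s hs using (Complex.Gamma_eq_integral hs).symm
  have h := (Complex.hasDerivAt_GammaIntegral (by norm_num : (0 : ℝ) < (1 : ℂ).re)).unique hΓ
  simp only [sub_self, Complex.cpow_zero, one_mul] at h
  apply Complex.ofReal_injective
  rw [← integral_complex_ofReal]
  simpa only [Complex.ofReal_mul, Complex.ofReal_neg] using h

theorem abs_log_le_two_mul_rpow_neg_half_add {u : ℝ} (hu : 0 < u) :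
    |log u| ≤ 2 * u ^ (-(1 / 2) : ℝ) + u := by
  rcases le_or_gt u 1 with h | h
  · have hsqrt : 0 < u ^ (1 / 2 : ℝ) := by positivity
    have hlog := abs_log_mul_self_rpow_lt u (1 / 2) hu h one_half_pos
    rw [abs_mul, abs_of_pos hsqrt, ← lt_div_iff₀ hsqrt] at hlog
    rw [rpow_neg hu.le, ← div_eq_mul_inv]
    norm_num at hlog
    linarith
  · have hpow : 0 ≤ u ^ (-(1 / 2) : ℝ) := by positivity
    rw [abs_of_nonneg (log_nonneg h.le)]
    linarith [log_le_sub_one_of_pos hu]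

theorem integrableOn_log_mul_exp_neg_Ioi_zero :
    IntegrableOn (fun u => log u * exp (-u)) (Ioi (0 : ℝ)) := by
  have hbound : IntegrableOn (fun u => 2 * (exp (-u) * u ^ ((1 / 2 : ℝ) - 1))
      + exp (-u) * u ^ ((2 : ℝ) - 1)) (Ioi 0) :=
    ((GammaIntegral_convergent (by norm_num)).const_mul 2).add
      (GammaIntegral_convergent (by norm_num))
  refine hbound.mono' ((continuousOn_log.mono fun u hu => ne_of_gt hu).mul
    (by fun_prop : Continuous fun u : ℝ => exp (-u)).continuousOn
    |>.aestronglyMeasurable measurableSet_Ioi) ?_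
  filter_upwards [ae_restrict_mem measurableSet_Ioi] with u (hu : 0 < u)
  have hlog := abs_log_le_two_mul_rpow_neg_half_add hu
  rw [norm_mul, norm_of_nonneg (exp_pos _).le, norm_eq_abs]
  norm_num
  nlinarith [exp_pos (-u)]

theorem integrableOn_inv_mul_exp_neg_Ioi {z : ℝ} (hz : 0 < z) :
    IntegrableOn (fun u => u⁻¹ * exp (-u)) (Ioi z) := by
  refine ((integrableOn_exp_neg_Ioi z).const_mul z⁻¹).mono' ((continuousOn_inv₀.mono
    fun u hu => (hz.trans hu).ne').mul (by fun_prop : Continuous fun u : ℝ => exp (-u)).continuousOn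
    |>.aestronglyMeasurable measurableSet_Ioi) ?_
  filter_upwards [ae_restrict_mem measurableSet_Ioi] with u (hu : z < u)
  rw [norm_mul, norm_of_nonneg (exp_pos _).le, norm_inv, norm_of_nonneg (hz.trans hu).le]
  gcongr

theorem tendsto_log_mul_exp_neg_atTop : Tendsto (fun u => log u * exp (-u)) atTop (𝓝 0) := by
  have h := tendsto_pow_mul_exp_neg_atTop_nhds_zero 1
  refine squeeze_zero' ?_ ?_ h
  · filter_upwards [eventually_ge_atTop 1] with u hu using
      mul_nonneg (log_nonneg hu) (exp_pos _).le
  · filter_upwards [eventually_gt_atTop 0] with u hu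
    rw [pow_one]
    gcongr
    linarith [log_le_sub_one_of_pos hu]

theorem tendsto_integral_Ioi_nhdsGT {f : ℝ → ℝ} {a : ℝ} (hf : IntegrableOn f (Ioi a)) :
    Tendsto (fun z => ∫ x in Ioi z, f x) (𝓝[>] a) (𝓝 (∫ x in Ioi a, f x)) := by
  have hint : IntervalIntegrable f volume (min a a) (max a (a + 1)) := by
    rw [min_self, max_eq_right (by linarith),
      intervalIntegrable_iff_integrableOn_Ioc_of_le (by linarith)]
    exact hf.mono_set Ioc_subset_Ioi_self
  have hIcc : Icc a (a + 1) ∈ 𝓝[>] a :=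
    mem_of_superset (Ioo_mem_nhdsGT (by linarith)) Ioo_subset_Icc_self
  have hprim : Tendsto (fun z => ∫ x in a..z, f x) (𝓝[>] a) (𝓝 0) := by
    simpa using ((intervalIntegral.continuousWithinAt_primitive (measure_singleton a) hint).tendsto
      |>.mono_left (nhdsWithin_le_of_mem hIcc))
  have hsplit : ∀ᶠ z in 𝓝[>] a, (∫ x in Ioi a, f x) - ∫ x in a..z, f x = ∫ x in Ioi z, f x := by
    filter_upwards [self_mem_nhdsWithin] with z (hz : a < z)
    rw [← intervalIntegral.integral_Ioi_sub_Ioi hf hz.le, sub_sub_cancel]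
  simpa using (tendsto_const_nhds.sub hprim).congr' hsplit

noncomputable def expIntegralE₁ (z : ℝ) : ℝ := ∫ u in Ioi z, u⁻¹ * exp (-u)

theorem expIntegralE₁_eq_integral_log_mul_exp_neg_sub {z : ℝ} (hz : 0 < z) :
    expIntegralE₁ z = (∫ u in Ioi z, log u * exp (-u)) - log z * exp (-z) := by
  have hderiv : ∀ u ∈ Ici z, HasDerivAt (fun u => log u * exp (-u))
      (u⁻¹ * exp (-u) - log u * exp (-u)) u := fun u hu => by
    simpa [sub_eq_add_neg] using
      (hasDerivAt_log (hz.trans_le hu).ne').fun_mul (hasDerivAt_neg u).exp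
  have hlog : IntegrableOn (fun u => log u * exp (-u)) (Ioi z) :=
    integrableOn_log_mul_exp_neg_Ioi_zero.mono_set (Ioi_subset_Ioi hz.le)
  have hibp := integral_Ioi_of_hasDerivAt_of_tendsto' hderiv
    ((integrableOn_inv_mul_exp_neg_Ioi hz).sub hlog) tendsto_log_mul_exp_neg_atTop
  rw [integral_sub (integrableOn_inv_mul_exp_neg_Ioi hz) hlog] at hibp
  rw [expIntegralE₁]
  linarith

theorem tendsto_expIntegralE₁_add_log :
    Tendsto (fun z => expIntegralE₁ z + log z) (𝓝[>] 0) (𝓝 (-eulerMascheroniConstant)) := by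
  have htail := tendsto_integral_Ioi_nhdsGT integrableOn_log_mul_exp_neg_Ioi_zero
  rw [integral_log_mul_exp_neg_Ioi_zero] at htail
  have hsmall : Tendsto (fun z => log z * (1 - exp (-z))) (𝓝[>] 0) (𝓝 0) := by
    have hmul_log : Tendsto (fun z => z * log z) (𝓝[>] 0) (𝓝 0) := by
      simpa using (continuous_mul_log.tendsto 0).mono_left nhdsWithin_le_nhds
    refine squeeze_zero_norm' ?_ (by simpa using hmul_log.norm)
    filter_upwards [self_mem_nhdsWithin] with z (hz : 0 < z)
    have h1 : 0 ≤ 1 - exp (-z) := by linarith [exp_le_one_iff.2 (neg_nonpos.2 hz.le)]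
    have h2 : 1 - exp (-z) ≤ z := by linarith [add_one_le_exp (-z)]
    rw [norm_mul, norm_of_nonneg h1, norm_eq_abs, abs_of_pos hz, mul_comm]
    gcongr
  have hsplit : ∀ᶠ z in 𝓝[>] 0, (∫ u in Ioi z, log u * exp (-u)) + log z * (1 - exp (-z))
      = expIntegralE₁ z + log z := by
    filter_upwards [self_mem_nhdsWithin] with z (hz : 0 < z)
    rw [expIntegralE₁_eq_integral_log_mul_exp_neg_sub hz]
    ring
  simpa using (htail.add hsmall).congr' hsplit

theorem integral_Ioi_inv_mul_exp_neg_sq_div {a c : ℝ} (ha : 0 ≤ a) (hc : 0 < c) :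
    ∫ r in Ioi a, r⁻¹ * exp (-r ^ 2 / c) = expIntegralE₁ (a ^ 2 / c) / 2 := by
  set f : ℝ → ℝ := fun r => r ^ 2 / c
  have hmono : StrictMonoOn f (Ici a) := fun x hx y _ hxy =>
    div_lt_div_of_pos_right (pow_lt_pow_left₀ hxy (ha.trans hx) two_ne_zero) hc
  have himage : f '' Ioi a = Ioi (f a) :=
    (by fun_prop : Continuous f).continuousOn.image_Ioi_of_strictMonoOn hmono
      ((tendsto_pow_atTop two_ne_zero).atTop_div_const hc)
  have hderiv : ∀ r ∈ Ioi a, HasDerivWithinAt f (2 * r / c) (Ioi a) r := fun r _ => by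
    simpa using ((hasDerivAt_pow 2 r).div_const c).hasDerivWithinAt
  have hsubst := integral_image_eq_integral_abs_deriv_smul measurableSet_Ioi hderiv
    (hmono.injOn.mono Ioi_subset_Ici_self) (fun u => u⁻¹ * exp (-u))
  rw [himage] at hsubst
  rw [expIntegralE₁, hsubst, ← integral_div]
  refine setIntegral_congr_fun measurableSet_Ioi fun r (hr : a < r) => ?_
  have hr0 : 0 < r := ha.trans_lt hr
  simp only [f]
  rw [abs_of_pos (by positivity), smul_eq_mul]
  field_simp

/-- For each fixed `t > 0`,
`lim_{x → -∞} ( x + ∫_{e^x}^∞ (1/r) e^{-r²/(2t)} dr ) = (1/2)(log 2 + log t − γ)`,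
where `γ` is the Euler–Mascheroni constant. -/
theorem invBessel2Dh_finite_limit_atBot (t : ℝ) (ht : 0 < t) :
    Tendsto (fun x : ℝ =>
        x + ∫ r in Set.Ioi (Real.exp x), r⁻¹ * Real.exp (-r ^ 2 / (2 * t)))
      atBot
      (nhds ((1 / 2) * (Real.log 2 + Real.log t - Real.eulerMascheroniConstant))) := by
  have h2t : 0 < 2 * t := by positivity
  have hz : Tendsto (fun x => exp x ^ 2 / (2 * t)) atBot (𝓝[>] 0) := by
    refine tendsto_nhdsWithin_iff.2 ⟨?_, Eventually.of_forall fun x => mem_Ioi.2 (by positivity)⟩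
    simpa using (tendsto_exp_atBot.pow 2).div_const (2 * t)
  have hlim := ((tendsto_expIntegralE₁_add_log.comp hz).div_const 2).add_const (log (2 * t) / 2)
  have hrepr : ∀ x : ℝ, (expIntegralE₁ (exp x ^ 2 / (2 * t)) + log (exp x ^ 2 / (2 * t))) / 2
      + log (2 * t) / 2 = x + ∫ r in Ioi (exp x), r⁻¹ * exp (-r ^ 2 / (2 * t)) := fun x => by
    rw [integral_Ioi_inv_mul_exp_neg_sq_div (exp_pos x).le h2t,
      log_div (by positivity) h2t.ne', log_pow, log_exp]
    ring
  convert hlim.congr hrepr using 2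
  rw [log_mul two_ne_zero ht.ne']
  ring
end

section
/- Let σ : ℝ → (0,∞) be continuous and u : ℝ → (0,∞) be C² with λu = (1/2)σ²u'' for λ > 0. Suppose s_u(∞) := ∫_0^∞ u(ξ)^{-2} dξ < ∞. Then u is unbounded; in fact lim_{ξ→∞} u(ξ) = ∞. -/
open MeasureTheory Filter Set

/-!
Positivity of `u` and `λ > 0` force `u'' > 0`, so `u'` is increasing. If `u'` ever becomes
positive, `u` lies above a tangent line of positive slope and tends to `∞`. Otherwise `u` is
nonincreasing, so `u⁻²` is bounded below by `u(0)⁻² > 0` on `(0, ∞)` and cannot be integrable.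
-/

theorem not_integrableOn_Ioi_of_pos_le {f : ℝ → ℝ} {a c : ℝ} (hc : 0 < c)
    (hf : ∀ x ∈ Ioi a, c ≤ f x) : ¬ IntegrableOn f (Ioi a) := by
  intro hint
  have hconst : IntegrableOn (fun _ ↦ c) (Ioi a) :=
    hint.mono' aestronglyMeasurable_const <| (ae_restrict_mem measurableSet_Ioi).mono
      fun x hx ↦ by rw [Real.norm_of_nonneg hc.le]; exact hf x hx
  rw [integrableOn_const_iff, Real.volume_Ioi] at hconst
  simp_all

theorem tendsto_atTop_of_monotone_deriv {u : ℝ → ℝ} (hu : Differentiable ℝ u)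
    (hmono : Monotone (deriv u)) {x₀ : ℝ} (hx₀ : 0 < deriv u x₀) : Tendsto u atTop atTop := by
  have htangent : ∀ x, x₀ ≤ x → u x₀ + deriv u x₀ * (x - x₀) ≤ u x := fun x hx ↦ by
    have := (convex_Ici x₀).mul_sub_le_image_sub_of_le_deriv hu.continuous.continuousOn
      hu.differentiableOn (fun y hy ↦ hmono (interior_Ici.subset hy).le) x₀ self_mem_Ici x hx hx
    linarith
  refine tendsto_atTop_mono' atTop (eventually_atTop.mpr ⟨x₀, htangent⟩) ?_
  exact tendsto_atTop_add_const_left _ _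
    ((tendsto_atTop_add_const_right _ _ tendsto_id).const_mul_atTop hx₀)

theorem tendsto_atTop_of_monotone_deriv_of_integrableOn_inv_sq {u : ℝ → ℝ}
    (hu : Differentiable ℝ u) (hmono : Monotone (deriv u)) (hpos : ∀ x, 0 < u x)
    (hint : IntegrableOn (fun x ↦ (u x ^ 2)⁻¹) (Ioi 0)) : Tendsto u atTop atTop := by
  by_cases hslope : ∃ x₀, 0 < deriv u x₀
  · obtain ⟨x₀, hx₀⟩ := hslope
    exact tendsto_atTop_of_monotone_deriv hu hmono hx₀
  · push Not at hslope
    have hanti : Antitone u := antitone_of_deriv_nonpos hu hslope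
    refine absurd hint (not_integrableOn_Ioi_of_pos_le (inv_pos.mpr (pow_pos (hpos 0) 2)) ?_)
    intro x hx
    have := hpos x
    gcongr
    exact hanti (le_of_lt hx)

theorem finite_scale_limit_implies_unbounded_general
    (σ u : ℝ → ℝ)
    (hupos : ∀ ξ, 0 < u ξ) (hu : ContDiff ℝ 2 u)
    (lam : ℝ) (hlam : 0 < lam)
    (hODE : ∀ ξ, lam * u ξ = (1 / 2) * (σ ξ) ^ 2 * iteratedDeriv 2 u ξ)
    (hfin : IntegrableOn (fun ξ => ((u ξ) ^ 2)⁻¹) (Set.Ioi 0) volume) :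
    Tendsto u atTop atTop := by
  have hconvex : ∀ ξ, 0 ≤ deriv (deriv u) ξ := fun ξ ↦ by
    rw [← iteratedDeriv_one, ← iteratedDeriv_succ']
    nlinarith [hODE ξ, mul_pos hlam (hupos ξ), sq_nonneg (σ ξ)]
  exact tendsto_atTop_of_monotone_deriv_of_integrableOn_inv_sq (hu.differentiable two_ne_zero)
    (monotone_of_deriv_nonneg hu.differentiable_deriv_two hconvex) hupos hfin

/-- Let `σ : ℝ → (0,∞)` be continuous and `u : ℝ → (0,∞)` a `C²` solution of
`λu = (1/2)σ²u''` for `λ > 0`. If `s_u(∞) = ∫_0^∞ u(ξ)⁻² dξ < ∞`, then `u` is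
unbounded; in fact `lim_{ξ→∞} u(ξ) = ∞`. -/
theorem finite_scale_limit_implies_unbounded
    (σ u : ℝ → ℝ) (hσc : Continuous σ) (hσpos : ∀ ξ, 0 < σ ξ)
    (hupos : ∀ ξ, 0 < u ξ) (hu : ContDiff ℝ 2 u)
    (lam : ℝ) (hlam : 0 < lam)
    (hODE : ∀ ξ, lam * u ξ = (1 / 2) * (σ ξ) ^ 2 * iteratedDeriv 2 u ξ)
    (hfin : IntegrableOn (fun ξ => ((u ξ) ^ 2)⁻¹) (Set.Ioi 0) volume) :
    Tendsto u atTop atTop :=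
  finite_scale_limit_implies_unbounded_general σ u hupos hu lam hlam hODE hfin
end
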